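/- arXiv:2310.01750 — 6 statements merged into one kernel-verified Lean document; each statement's English description precedes it below -/
import Mathlib

section
/- Let ξ = (ξ₁, ξ₂) be the random vector on {-1,0,1}² with P(ξ=(x,x))=0 for all x, P(ξ=(-1,0))=P(ξ=(0,1))=P(ξ=(1,-1))=1/9, and P(ξ=(0,-1))=P(ξ=(1,0))=P(ξ=(-1,1))=2/9. Then for every function f : {-1,0,1} → {0,1}, the pair (f(ξ₁), f(ξ₂)) is exchangeable. -/
/-!
A two-colouring `f` only sees the events `{f ξ₁ = a}` and `{f ξ₂ = a}`. With two colours,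
`P(f ξ₁ = a, f ξ₂ = b)` for `a ≠ b` is the marginal `P(f ξ₁ = a)` minus the diagonal term
`P(f ξ₁ = a, f ξ₂ = a)`, and likewise for `P(f ξ₁ = b, f ξ₂ = a)` with `P(f ξ₂ = a)`.
So two-colour exchangeability follows as soon as `ξ₁` and `ξ₂` have the same law, and here
both marginals are uniform on `{-1,0,1}`.
-/

/-- Law of `(f ξ₁, f ξ₂)` when `(ξ₁, ξ₂)` has pmf `μ` on `{-1,0,1}²`. -/
noncomputable def pushPair (μ : ℤ × ℤ → ℝ) (f : ℤ → Fin 2) (a b : Fin 2) : ℝ :=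
  ∑ x ∈ ({-1, 0, 1} : Finset ℤ), ∑ y ∈ ({-1, 0, 1} : Finset ℤ),
    if f x = a ∧ f y = b then μ (x, y) else 0

open Finset

/-- `pushPair μ f` is `pairLaw {-1, 0, 1} μ f` by definition. -/
noncomputable def pairLaw {α β : Type*} [DecidableEq β] (s : Finset α) (μ : α × α → ℝ)
    (f : α → β) (a b : β) : ℝ :=
  ∑ x ∈ s, ∑ y ∈ s, if f x = a ∧ f y = b then μ (x, y) else 0

section pairLaw

variable {α : Type*} (s : Finset α) (μ : α × α → ℝ)

theorem sum_sum_ite_fst_eq_snd_of_marginals_eq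
    (hμ : ∀ x ∈ s, ∑ y ∈ s, μ (x, y) = ∑ y ∈ s, μ (y, x)) (p : α → Prop) [DecidablePred p] :
    ∑ x ∈ s, ∑ y ∈ s, (if p x then μ (x, y) else 0) =
      ∑ x ∈ s, ∑ y ∈ s, if p y then μ (x, y) else 0 := by
  rw [sum_comm (s := s) (t := s) (f := fun x y => if p y then μ (x, y) else 0)]
  refine sum_congr rfl fun x hx => ?_
  by_cases hx' : p x <;> simp only [hx', if_true, if_false, hμ x hx]

variable {β : Type*} [DecidableEq β] [Fintype β]

theorem sum_pairLaw_right (f : α → β) (a : β) :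
    ∑ c, pairLaw s μ f a c = ∑ x ∈ s, ∑ y ∈ s, if f x = a then μ (x, y) else 0 := by
  unfold pairLaw
  rw [sum_comm]
  refine sum_congr rfl fun x _ => ?_
  rw [sum_comm]
  refine sum_congr rfl fun y _ => ?_
  simp only [ite_and, sum_ite_irrel, sum_ite_eq, mem_univ, if_true, sum_const_zero]

theorem sum_pairLaw_left (f : α → β) (b : β) :
    ∑ c, pairLaw s μ f c b = ∑ x ∈ s, ∑ y ∈ s, if f y = b then μ (x, y) else 0 := by
  unfold pairLaw
  rw [sum_comm]
  refine sum_congr rfl fun x _ => ?_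
  rw [sum_comm]
  refine sum_congr rfl fun y _ => ?_
  simp only [ite_and, sum_ite_eq, mem_univ, if_true]

theorem pairLaw_comm_of_marginals_eq (f : α → Fin 2)
    (hμ : ∀ x ∈ s, ∑ y ∈ s, μ (x, y) = ∑ y ∈ s, μ (y, x)) :
    ∀ a b, pairLaw s μ f a b = pairLaw s μ f b a := by
  have h0 := sum_sum_ite_fst_eq_snd_of_marginals_eq s μ hμ (f · = 0)
  rw [← sum_pairLaw_right, ← sum_pairLaw_left, Fin.sum_univ_two, Fin.sum_univ_two,
    add_right_inj] at h0
  simp only [Fin.forall_fin_two, h0, and_self]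

end pairLaw

theorem stmt_1_general (μ : ℤ × ℤ → ℝ)
    (h1 : μ (-1, 0) = 1/9) (h2 : μ (0, 1) = 1/9) (h3 : μ (1, -1) = 1/9)
    (h4 : μ (0, -1) = 2/9) (h5 : μ (1, 0) = 2/9) (h6 : μ (-1, 1) = 2/9) :
    ∀ f : ℤ → Fin 2, ∀ a b : Fin 2, pushPair μ f a b = pushPair μ f b a := by
  have hμ : ∀ x ∈ ({-1, 0, 1} : Finset ℤ),
      ∑ y ∈ ({-1, 0, 1} : Finset ℤ), μ (x, y) = ∑ y ∈ ({-1, 0, 1} : Finset ℤ), μ (y, x) := by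
    simp [h1, h2, h3, h4, h5, h6, add_comm, add_left_comm]
  exact fun f => pairLaw_comm_of_marginals_eq _ μ f hμ

/-- The specified pmf on `{-1,0,1}²` is two-color exchangeable. -/
theorem stmt_1 (μ : ℤ × ℤ → ℝ)
    (hdiag : ∀ x ∈ ({-1, 0, 1} : Finset ℤ), μ (x, x) = 0)
    (h1 : μ (-1, 0) = 1/9) (h2 : μ (0, 1) = 1/9) (h3 : μ (1, -1) = 1/9)
    (h4 : μ (0, -1) = 2/9) (h5 : μ (1, 0) = 2/9) (h6 : μ (-1, 1) = 2/9) :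
    ∀ f : ℤ → Fin 2, ∀ a b : Fin 2, pushPair μ f a b = pushPair μ f b a :=
  stmt_1_general μ h1 h2 h3 h4 h5 h6
end

section
/- There exists a probability distribution μ on {-1,0,1}² that is two-color exchangeable but not exchangeable. -/
/-!
The witness is the law of `(X, σ X)` with `X` uniform on `{-1, 0, 1}` and `σ` the 3-cycle
`-1 ↦ 0 ↦ 1 ↦ -1`; it is not symmetric, as `(-1, 0)` has mass `1/3` and `(0, -1)` none.
For a colouring with two colours `a ≠ b`, the steps `x ↦ σ x` leave the class of `b` exactly
as often as they enter it, because `σ` maps that class onto a set of the same size; so steps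
from `a` to `b` are as frequent as steps from `b` to `a`, which is the exchangeability of the
two-colour pushforward.
-/

open Finset Equiv

namespace Equiv.Perm

variable {α : Type*} {σ : Perm α} {s : Finset α}

theorem card_filter_eq_and_apply_eq_comm (hs : {a | σ a ≠ a} ⊆ s) (g : α → Fin 2)
    (a b : Fin 2) :
    #{x ∈ s | g x = a ∧ g (σ x) = b} = #{x ∈ s | g x = b ∧ g (σ x) = a} := by
  rcases eq_or_ne a b with rfl | hab
  · rfl
  have hcol : ∀ c : Fin 2, c = a ∨ c = b := by
    revert a b; decide
  have hin : #{x ∈ s | g x = a ∧ g (σ x) = b} + #{x ∈ s | g x = b ∧ g (σ x) = b} =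
      #{x ∈ s | g (σ x) = b} := by
    simp only [card_filter, ← sum_add_distrib]
    refine sum_congr rfl fun x _ => ?_
    rcases hcol (g x) with h | h <;> simp [h, hab, hab.symm]
  have hout : #{x ∈ s | g x = b ∧ g (σ x) = a} + #{x ∈ s | g x = b ∧ g (σ x) = b} =
      #{x ∈ s | g x = b} := by
    simp only [card_filter, ← sum_add_distrib]
    refine sum_congr rfl fun x _ => ?_
    rcases hcol (g (σ x)) with h | h <;> simp [h, hab, hab.symm]
  have hshift : #{x ∈ s | g (σ x) = b} = #{x ∈ s | g x = b} := by
    simpa only [card_filter] using σ.sum_comp s (fun x => if g x = b then 1 else 0) hs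
  omega

theorem apply_mem_of_support_subset (hs : {a | σ a ≠ a} ⊆ s) {x : α} (hx : x ∈ s) :
    σ x ∈ s := by
  rw [← map_perm hs]
  exact mem_map_of_mem _ hx

end Equiv.Perm

section GraphLaw

variable {α : Type*} [DecidableEq α]

noncomputable def graphLaw (s : Finset α) (σ : Perm α) (p : α × α) : ℝ :=
  if p.1 ∈ s ∧ p.2 = σ p.1 then (#s : ℝ)⁻¹ else 0

variable {s : Finset α} {σ : Perm α}

theorem graphLaw_nonneg (p : α × α) : 0 ≤ graphLaw s σ p := by
  unfold graphLaw
  split_ifs <;> positivity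

theorem graphLaw_eq_zero (hs : {a | σ a ≠ a} ⊆ s) {x y : α} (h : x ∉ s ∨ y ∉ s) :
    graphLaw s σ (x, y) = 0 := by
  refine if_neg fun ⟨hx, (hy : y = σ x)⟩ => ?_
  rcases h with h | h
  · exact h hx
  · exact h (hy ▸ σ.apply_mem_of_support_subset hs hx)

theorem sum_ite_graphLaw (hs : {a | σ a ≠ a} ⊆ s) {x : α} (hx : x ∈ s) (p : α → Prop)
    [DecidablePred p] :
    ∑ y ∈ s, (if p y then graphLaw s σ (x, y) else 0) = if p (σ x) then (#s : ℝ)⁻¹ else 0 := by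
  simp only [graphLaw, hx, true_and]
  rw [← sum_filter, sum_ite_eq']
  simp [σ.apply_mem_of_support_subset hs hx]

theorem sum_sum_graphLaw (hs : {a | σ a ≠ a} ⊆ s) (hne : s.Nonempty) :
    ∑ x ∈ s, ∑ y ∈ s, graphLaw s σ (x, y) = 1 := by
  have hrow := fun x (hx : x ∈ s) => sum_ite_graphLaw hs hx (fun _ => True)
  simp only [if_true] at hrow
  rw [sum_congr rfl hrow, sum_const, nsmul_eq_mul]
  exact mul_inv_cancel₀ (by exact_mod_cast hne.card_pos.ne')

end GraphLaw

theorem pushPair_graphLaw {σ : Perm ℤ} (hs : {a | σ a ≠ a} ⊆ ({-1, 0, 1} : Finset ℤ))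
    (f : ℤ → Fin 2) (a b : Fin 2) :
    pushPair (graphLaw {-1, 0, 1} σ) f a b =
      #{x ∈ ({-1, 0, 1} : Finset ℤ) | f x = a ∧ f (σ x) = b} / 3 := by
  unfold pushPair
  rw [sum_congr rfl fun x hx => sum_ite_graphLaw hs hx fun y => f x = a ∧ f y = b,
    ← sum_filter, sum_const, nsmul_eq_mul, div_eq_mul_inv]
  norm_num

theorem pushPair_graphLaw_comm {σ : Perm ℤ} (hs : {a | σ a ≠ a} ⊆ ({-1, 0, 1} : Finset ℤ))
    (f : ℤ → Fin 2) (a b : Fin 2) :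
    pushPair (graphLaw {-1, 0, 1} σ) f a b = pushPair (graphLaw {-1, 0, 1} σ) f b a := by
  rw [pushPair_graphLaw hs, pushPair_graphLaw hs, σ.card_filter_eq_and_apply_eq_comm hs]

/-- There is a probability distribution on `{-1,0,1}²` that is two-color
exchangeable but not exchangeable. -/
theorem stmt_2 :
    ∃ μ : ℤ × ℤ → ℝ,
      (∀ p, 0 ≤ μ p) ∧
      (∑ x ∈ ({-1, 0, 1} : Finset ℤ), ∑ y ∈ ({-1, 0, 1} : Finset ℤ), μ (x, y) = 1) ∧
      (∀ x y : ℤ, x ∉ ({-1, 0, 1} : Finset ℤ) ∨ y ∉ ({-1, 0, 1} : Finset ℤ) →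
        μ (x, y) = 0) ∧
      (∀ f : ℤ → Fin 2, ∀ a b : Fin 2, pushPair μ f a b = pushPair μ f b a) ∧
      ¬ (∀ x ∈ ({-1, 0, 1} : Finset ℤ), ∀ y ∈ ({-1, 0, 1} : Finset ℤ),
          μ (x, y) = μ (y, x)) := by
  set σ : Perm ℤ := List.formPerm [-1, 0, 1]
  have hs : {a | σ a ≠ a} ⊆ ({-1, 0, 1} : Finset ℤ) :=
    (List.support_formPerm_le' _).trans_eq (by simp)
  refine ⟨graphLaw {-1, 0, 1} σ, graphLaw_nonneg, sum_sum_graphLaw hs (by simp),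
    fun x y => graphLaw_eq_zero hs, pushPair_graphLaw_comm hs, fun hsymm => ?_⟩
  have h1 : σ (-1) = 0 := by decide
  have h2 : σ 0 = 1 := by decide
  have hswap := hsymm (-1) (by simp) 0 (by simp)
  simp [graphLaw, h1, h2] at hswap
end

section
/- For n ≥ 3, the measure μ on Ω defined by μ(f_{-1,i})=μ(f_{1,i})=μ(s_{0,i})=(n-i+1)/(3n(n+1)) and μ(s_{-1,i})=μ(s_{1,i})=μ(f_{0,i})=i/(3n(n+1)) is not exchangeable. -/
/-- The symbol set `{-1, 0, 1} ⊆ ℤ`. -/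
abbrev S3 : Finset ℤ := {-1, 0, 1}

/-- The symbol `-1`. -/
def em1 : ↥S3 := ⟨-1, by decide⟩
/-- The symbol `0`. -/
def e0 : ↥S3 := ⟨0, by decide⟩
/-- The symbol `1`. -/
def e1 : ↥S3 := ⟨1, by decide⟩

/-- Multiplicity of the symbol `α` in the string `ω`. -/
def cnt {n : ℕ} (ω : Fin n → ↥S3) (α : ↥S3) : ℕ :=
  (Finset.univ.filter fun i => ω i = α).card

/-- `Ω`: strings in `{-1,0,1}ⁿ` in which every symbol appears `0`, `1`
or `n-1` times. -/
def Omega (n : ℕ) : Finset (Fin n → ↥S3) :=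
  Finset.univ.filter fun ω => ∀ α : ↥S3, cnt ω α = 0 ∨ cnt ω α = 1 ∨ cnt ω α = n - 1

/-- The string with `α` at position `i` and `β` everywhere else. -/
def str (n : ℕ) (α β : ↥S3) (i : Fin n) : Fin n → ↥S3 :=
  fun k => if k = i then α else β

/- For a symbol `α` and a position `i`, the two elements of `Ω_α` having `α`
exactly at position `i` are `str n α β i` for the two symbols `β ≠ α`; in
lexicographic order they are `f_{α,i}` (smaller `β`) and `s_{α,i}` (larger
`β`).  Explicitly (with `i` one-based in the paper, zero-based here):
`f_{-1,i} = str (-1) 0 i`, `s_{-1,i} = str (-1) 1 i`,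
`f_{0,i} = str 0 (-1) i`, `s_{0,i} = str 0 1 i`,
`f_{1,i} = str 1 (-1) i`, `s_{1,i} = str 1 0 i`. -/

/-- The measure of the paper: `μ(f_{-1,i}) = μ(f_{1,i}) = μ(s_{0,i})
= (n-i+1)/(3n(n+1))` and `μ(s_{-1,i}) = μ(s_{1,i}) = μ(f_{0,i})
= i/(3n(n+1))` for one-based `i`, and `μ = 0` off these `6n` strings. -/
noncomputable def muPaper (n : ℕ) : (Fin n → ↥S3) → ℝ := fun x =>
  ∑ i : Fin n,
    ((if x = str n em1 e0 i ∨ x = str n e1 em1 i ∨ x = str n e0 e1 i then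
        ((n : ℝ) - (i : ℕ)) / (3 * n * (n + 1)) else 0) +
     (if x = str n em1 e1 i ∨ x = str n e1 e0 i ∨ x = str n e0 em1 i then
        (((i : ℕ) : ℝ) + 1) / (3 * n * (n + 1)) else 0))

/-! The transposition of the first two coordinates maps `f_{-1,1}` to `f_{-1,2}`, whose masses
`n/(3n(n+1))` and `(n-1)/(3n(n+1))` differ. The mass of `f_{-1,i}` is read off a single summand of
`muPaper` because, once `n ≥ 3`, a string `str n α β i` with `α ≠ β` determines `α`, `β` and `i`:
some third position carries `β`. -/

lemma str_eq_str_iff {n : ℕ} (hn : 3 ≤ n) {α β α' β' : ↥S3} (hαβ : α ≠ β) {i j : Fin n} :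
    str n α β i = str n α' β' j ↔ α = α' ∧ β = β' ∧ i = j := by
  refine ⟨fun h => ?_, fun ⟨rfl, rfl, rfl⟩ => rfl⟩
  have hat (k : Fin n) := congrFun h k
  obtain ⟨k, hki, hkj⟩ := Fin.exists_ne_and_ne_of_two_lt i j hn
  have hββ' : β = β' := by simpa [str, hki, hkj] using hat k
  have hij : i = j := by
    by_contra hij
    have hi := hat i
    simp [str, hij] at hi
    exact hαβ (hi.trans hββ'.symm)
  subst hij
  exact ⟨by simpa [str] using hat i, hββ', rfl⟩

lemma str_comp_perm {n : ℕ} (α β : ↥S3) (i : Fin n) (π : Equiv.Perm (Fin n)) :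
    str n α β i ∘ π = str n α β (π.symm i) := by
  ext k
  simp only [Function.comp_apply, str, Equiv.eq_symm_apply]

lemma muPaper_str_em1_e0 {n : ℕ} (hn : 3 ≤ n) (i : Fin n) :
    muPaper n (str n em1 e0 i) = ((n : ℝ) - (i : ℕ)) / (3 * n * (n + 1)) := by
  have hne : em1 ≠ e0 ∧ em1 ≠ e1 ∧ e0 ≠ e1 := by decide
  simp [muPaper, str_eq_str_iff hn hne.1, hne, hne.1.symm]

/-- The measure `μ` of the paper is not exchangeable. -/
theorem stmt_10 (n : ℕ) (hn : 3 ≤ n) :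
    ¬ (∀ π : Equiv.Perm (Fin n), ∀ x : Fin n → ↥S3,
        muPaper n (x ∘ π) = muPaper n x) := by
  intro h
  let i₀ : Fin n := ⟨0, by omega⟩
  let i₁ : Fin n := ⟨1, by omega⟩
  have hswap := h (Equiv.swap i₀ i₁) (str n em1 e0 i₀)
  rw [str_comp_perm, Equiv.symm_swap, Equiv.swap_apply_left, muPaper_str_em1_e0 hn,
    muPaper_str_em1_e0 hn, div_left_inj' (by positivity)] at hswap
  simp [i₀, i₁] at hswap
end

section
/- For n ≥ 3, the measure μ on Ω defined by μ(f_{-1,i})=μ(f_{1,i})=μ(s_{0,i})=(n-i+1)/(3n(n+1)) and μ(s_{-1,i})=μ(s_{1,i})=μ(f_{0,i})=i/(3n(n+1)) is two-color exchangeable: for every f : {-1,0,1} → {0,1}, the pushforward of μ under coordinatewise f is an exchangeable measure on {0,1}ⁿ. -/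
/-! Under coordinatewise `f`, the six strings of `Ω` with their distinguished symbol at position `i`
become the binary strings with `f α` at `i` and `f β` elsewhere, where `(α, β)` runs over the edges
of the cycle `-1 → 0 → 1 → -1` (weight `(n - i)/(3n(n+1))`, zero-based `i`) and over their
reversals (weight `(i + 1)/(3n(n+1))`). Seen through two colours the cycle repeats a colour, so the
reversed edges yield the same binary strings as the forward ones; the weights then add up to
`1/(3n)` independently of `i`, and a permutation of the coordinates merely relabels `i`. -/

open Finset Function

theorem cycle_sum_eq_reverse_of_not_injective {α M : Type*} [AddCommMonoid M] (c : α → α → M)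
    {p q r : α} (h : p = q ∨ q = r ∨ r = p) :
    c p q + c q r + c r p = c q p + c r q + c p r := by
  rcases h with rfl | rfl | rfl <;> abel

theorem cycle_sum_eq_reverse_fin_two {M : Type*} [AddCommMonoid M] (c : Fin 2 → Fin 2 → M)
    (p q r : Fin 2) : c p q + c q r + c r p = c q p + c r q + c p r :=
  cycle_sum_eq_reverse_of_not_injective c (by revert p q r; decide)

theorem ite_or3_eq_add {ι M : Type*} [AddMonoid M] {x a b c : ι} (hab : a ≠ b) (hac : a ≠ c)
    (hbc : b ≠ c) (w : M) [Decidable (x = a)] [Decidable (x = b)] [Decidable (x = c)] :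
    (if x = a ∨ x = b ∨ x = c then w else 0) =
      (if x = a then w else 0) + (if x = b then w else 0) + (if x = c then w else 0) := by
  by_cases ha : x = a <;> by_cases hb : x = b <;> by_cases hc : x = c <;> simp_all

section Strings

variable {n : ℕ}

theorem str_ne_of_ne {α α' : ↥S3} (β β' : ↥S3) (i : Fin n) (h : α ≠ α') :
    str n α β i ≠ str n α' β' i :=
  fun e => h (by simpa [str] using congrFun e i)

theorem comp_str (f : ↥S3 → Fin 2) (α β : ↥S3) (i : Fin n) :
    (fun k => f (str n α β i k)) = update (fun _ => f β) i (f α) := by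
  funext k
  simp only [str, update_apply, apply_ite f]

noncomputable def weightCyc (n : ℕ) (i : Fin n) : ℝ := ((n : ℝ) - (i : ℕ)) / (3 * n * (n + 1))

noncomputable def weightRev (n : ℕ) (i : Fin n) : ℝ := (((i : ℕ) : ℝ) + 1) / (3 * n * (n + 1))

theorem weightCyc_add_weightRev (i : Fin n) : weightCyc n i + weightRev n i = 1 / (3 * n) := by
  rw [weightCyc, weightRev, ← add_div, show (n : ℝ) - i + (i + 1) = 1 * (n + 1) by ring]
  exact mul_div_mul_right _ _ (by positivity)

theorem sum_ite_muPaper (P : (Fin n → ↥S3) → Prop) [DecidablePred P] :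
    (∑ x, if P x then muPaper n x else 0) =
      ∑ i, (weightCyc n i * ((if P (str n em1 e0 i) then 1 else 0) +
              (if P (str n e1 em1 i) then 1 else 0) + (if P (str n e0 e1 i) then 1 else 0)) +
            weightRev n i * ((if P (str n em1 e1 i) then 1 else 0) +
              (if P (str n e1 e0 i) then 1 else 0) + (if P (str n e0 em1 i) then 1 else 0))) := by
  rw [← sum_filter]
  unfold muPaper
  rw [sum_comm]
  refine sum_congr rfl fun i _ => ?_
  have hne {α α'} (β β') (h : α ≠ α') := str_ne_of_ne β β' i h
  simp only [ite_or3_eq_add (hne _ _ (by decide : em1 ≠ e1)) (hne _ _ (by decide : em1 ≠ e0))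
    (hne _ _ (by decide : e1 ≠ e0)), sum_add_distrib, sum_ite_eq', mem_filter, mem_univ, true_and,
    weightCyc, weightRev, mul_add, mul_ite, mul_one, mul_zero]

noncomputable def hit (z : Fin n → Fin 2) (i : Fin n) (a b : Fin 2) : ℝ :=
  if update (fun _ => b) i a = z then 1 else 0

theorem hit_comp_perm (z : Fin n → Fin 2) (π : Equiv.Perm (Fin n)) (i : Fin n) (a b : Fin 2) :
    hit (z ∘ π) i a b = hit z (π i) a b := by
  have : update (fun _ => b) (π i) a ∘ π = update (fun _ => b) i a := by
    rw [update_comp_equiv, Equiv.symm_apply_apply]; rfl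
  simp only [hit, ← this, π.surjective.injective_comp_right.eq_iff]

noncomputable def cycleHits (f : ↥S3 → Fin 2) (z : Fin n → Fin 2) (i : Fin n) : ℝ :=
  hit z i (f em1) (f e0) + hit z i (f e0) (f e1) + hit z i (f e1) (f em1)

theorem cycleHits_comp_perm (f : ↥S3 → Fin 2) (z : Fin n → Fin 2) (π : Equiv.Perm (Fin n))
    (i : Fin n) : cycleHits f (z ∘ π) i = cycleHits f z (π i) := by
  simp only [cycleHits, hit_comp_perm]

theorem sum_ite_comp_eq_muPaper (f : ↥S3 → Fin 2) (z : Fin n → Fin 2) :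
    (∑ x, if (fun i => f (x i)) = z then muPaper n x else 0) =
      1 / (3 * n) * ∑ i, cycleHits f z i := by
  rw [sum_ite_muPaper, mul_sum]
  refine sum_congr rfl fun i _ => ?_
  have hrev := cycle_sum_eq_reverse_fin_two (hit z i) (f em1) (f e0) (f e1)
  simp only [comp_str, ← hit.eq_1]
  rw [← weightCyc_add_weightRev i, cycleHits]
  linear_combination -weightRev n i * hrev

end Strings

theorem stmt_11_general (n : ℕ) :
    ∀ f : ↥S3 → Fin 2, ∀ π : Equiv.Perm (Fin n), ∀ y : Fin n → Fin 2,
      (∑ x : Fin n → ↥S3, if (fun i => f (x i)) = y ∘ π then muPaper n x else 0) =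
        ∑ x : Fin n → ↥S3, if (fun i => f (x i)) = y then muPaper n x else 0 := by
  intro f π y
  rw [sum_ite_comp_eq_muPaper, sum_ite_comp_eq_muPaper]
  simp only [cycleHits_comp_perm, Equiv.sum_comp]

/-- The measure `μ` of the paper is two-color exchangeable: for every
`f : {-1,0,1} → {0,1}`, the pushforward of `μ` under coordinatewise `f` is an
exchangeable measure on `{0,1}ⁿ`. -/
theorem stmt_11 (n : ℕ) (hn : 3 ≤ n) :
    ∀ f : ↥S3 → Fin 2, ∀ π : Equiv.Perm (Fin n), ∀ y : Fin n → Fin 2,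
      (∑ x : Fin n → ↥S3, if (fun i => f (x i)) = y ∘ π then muPaper n x else 0) =
        ∑ x : Fin n → ↥S3, if (fun i => f (x i)) = y then muPaper n x else 0 :=
  stmt_11_general n
end

section
/- For every n ≥ 2 there exists a probability distribution on {-1,0,1}ⁿ that is two-color exchangeable but not exchangeable. -/
/-!
Perturb the uniform distribution on `Sⁿ` by a signed weight on the strings carrying a symbol `α`
at a fixed position `i` and a symbol `β` everywhere else, the weight being `K α β` for an
antisymmetric kernel `K` whose rows sum to zero; on `{-1, 0, 1}` take `K α β = ±1` according as
`β - α ≡ ±1 (mod 3)`. For a two-colouring `f`, the fibres `f⁻¹ a` and `f⁻¹ b` are either equal,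
where antisymmetry makes `∑ K` vanish, or complementary, where the zero row sums do. So the
perturbation pushes forward to zero under every two-colouring, and the coloured distribution is
that of the uniform one. Swapping position `i` with another one, however, moves a string of weight
`K α β > 0` to one of weight at most `0`.
-/

open Finset Function

section PairKernel

variable {S : Type*} [Fintype S] [DecidableEq S] (K : S → S → ℝ)

lemma sum_fiber_fiber_eq_zero (hanti : ∀ α β, K α β = -K β α) (hrow : ∀ α, ∑ β, K α β = 0)
    (f : S → Fin 2) (a b : Fin 2) :
    ∑ α ∈ univ with f α = a, ∑ β ∈ univ with f β = b, K α β = 0 := by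
  set A := univ.filter fun α => f α = a
  have hdiag : ∑ α ∈ A, ∑ β ∈ A, K α β = 0 := by
    have h : ∑ α ∈ A, ∑ β ∈ A, K α β = -∑ α ∈ A, ∑ β ∈ A, K α β := by
      conv_lhs => rw [sum_comm]
      simp only [← sum_neg_distrib]
      exact sum_congr rfl fun β _ => sum_congr rfl fun α _ => hanti α β
    linarith
  rcases eq_or_ne a b with rfl | hab
  · exact hdiag
  · have hcompl : (univ.filter fun β => f β = b) = Aᶜ := by
      ext β; simp only [A, mem_filter, mem_univ, true_and, mem_compl]; omega
    have hsplit : ∀ α, ∑ β ∈ Aᶜ, K α β = -∑ β ∈ A, K α β := fun α => by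
      linarith [sum_compl_add_sum A (K α), hrow α]
    simp only [hcompl, hsplit, sum_neg_distrib, hdiag, neg_zero]

lemma sum_ite_rel_comp_eq_zero (hanti : ∀ α β, K α β = -K β α) (hrow : ∀ α, ∑ β, K α β = 0)
    (f : S → Fin 2) (R : Fin 2 → Fin 2 → Prop) [DecidableRel R] :
    ∑ α, ∑ β, (if R (f α) (f β) then K α β else 0) = 0 := by
  rw [← sum_fiberwise univ f]
  refine sum_eq_zero fun a _ => ?_
  have hinner : ∀ α ∈ univ.filter fun α => f α = a, ∑ β, (if R (f α) (f β) then K α β else 0) =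
      ∑ b, if R a b then ∑ β ∈ univ with f β = b, K α β else 0 := by
    intro α hα
    rw [(mem_filter.1 hα).2, ← sum_fiberwise univ f]
    refine sum_congr rfl fun b _ => ?_
    rw [sum_congr rfl (g := fun β => if R a b then K α β else 0) fun β hβ => by
      rw [(mem_filter.1 hβ).2], sum_ite_irrel, sum_const_zero]
  rw [sum_congr rfl hinner, sum_comm]
  refine sum_eq_zero fun b _ => ?_
  rw [sum_ite_irrel, sum_fiber_fiber_eq_zero K hanti hrow f a b, sum_const_zero, ite_self]

variable {n : ℕ} (i : Fin n)

noncomputable def pairPerturbation (x : Fin n → S) : ℝ :=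
  ∑ α, ∑ β, if x = update (fun _ => β) i α then K α β else 0

lemma sum_filter_pairPerturbation (P : (Fin n → S) → Prop) [DecidablePred P] :
    ∑ x ∈ univ with P x, pairPerturbation K i x =
      ∑ α, ∑ β, if P (update (fun _ => β) i α) then K α β else 0 := by
  have h : ∀ x, (if P x then pairPerturbation K i x else 0) = ∑ α, ∑ β,
      if x = update (fun _ => β) i α then (if P (update (fun _ => β) i α) then K α β else 0)
      else 0 := by
    intro x
    simp only [pairPerturbation, ite_sum_zero]
    refine sum_congr rfl fun α _ => sum_congr rfl fun β _ => ?_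
    by_cases hx : x = update (fun _ => β) i α
    · subst hx; simp
    · simp [hx]
  rw [sum_filter, sum_congr rfl fun x _ => h x, sum_comm]
  refine sum_congr rfl fun α _ => ?_
  rw [sum_comm]
  exact sum_congr rfl fun β _ => by simp

lemma sum_pairPerturbation (hrow : ∀ α, ∑ β, K α β = 0) :
    ∑ x, pairPerturbation K i x = 0 := by
  simpa [hrow] using sum_filter_pairPerturbation K i fun _ => True

lemma sum_filter_comp_pairPerturbation_eq_zero (hanti : ∀ α β, K α β = -K β α)
    (hrow : ∀ α, ∑ β, K α β = 0) (f : S → Fin 2) (y : Fin n → Fin 2) :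
    ∑ x ∈ univ with (fun k => f (x k)) = y, pairPerturbation K i x = 0 := by
  rw [sum_filter_pairPerturbation]
  have hcomp : ∀ α β, (fun k => f (update (fun _ => β) i α k)) = update (fun _ => f β) i (f α) :=
    fun α β => comp_update f _ i α
  simp only [hcomp]
  exact sum_ite_rel_comp_eq_zero K hanti hrow f fun a b => update (fun _ => b) i a = y

lemma pairPerturbation_apply {j : Fin n} (hj : j ≠ i) (x : Fin n → S) :
    pairPerturbation K i x =
      if x = update (fun _ => x j) i (x i) then K (x i) (x j) else 0 := by
  unfold pairPerturbation
  rw [sum_eq_single (x i), sum_eq_single (x j)]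
  · intro β _ hβ
    refine if_neg fun hx => hβ ?_
    simpa [hj] using (congrFun hx j).symm
  · simp
  · intro α _ hα
    refine sum_eq_zero fun β _ => if_neg fun hx => hα ?_
    simpa using (congrFun hx i).symm
  · simp

lemma neg_one_le_pairPerturbation {j : Fin n} (hj : j ≠ i) (hK : ∀ α β, -1 ≤ K α β)
    (x : Fin n → S) :
    -1 ≤ pairPerturbation K i x := by
  rw [pairPerturbation_apply K i hj]
  split_ifs
  exacts [hK _ _, by norm_num]

lemma pairPerturbation_update {j : Fin n} (hj : j ≠ i) (α β : S) :
    pairPerturbation K i (update (fun _ => β) i α) = K α β := by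
  rw [pairPerturbation_apply K i hj]
  simp [hj]

lemma pairPerturbation_update_comp_swap_nonpos {j : Fin n} (hj : j ≠ i)
    (hanti : ∀ α β, K α β = -K β α) {α β : S} (h : 0 ≤ K α β) :
    pairPerturbation K i (update (fun _ => β) i α ∘ Equiv.swap i j) ≤ 0 := by
  rw [pairPerturbation_apply K i hj]
  split_ifs
  · simpa [hj, hanti β α] using h
  · exact le_rfl

end PairKernel

lemma card_filter_comp_eq_comp_perm {S T : Type*} [Fintype S] [DecidableEq S] [DecidableEq T]
    {n : ℕ} (f : S → T) (π : Equiv.Perm (Fin n)) (y : Fin n → T) :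
    #{x : Fin n → S | (fun k => f (x k)) = y ∘ π} = #{x : Fin n → S | (fun k => f (x k)) = y} :=
  card_equiv (Equiv.arrowCongr π (Equiv.refl S)) fun x => by
    simp only [mem_filter, mem_univ, true_and, funext_iff, comp_apply,
      Equiv.arrowCongr_apply, Equiv.coe_refl]
    exact ⟨fun h k => by simpa using h (π.symm k), fun h k => by simpa using h (π k)⟩

theorem exists_twoColorExchangeable_not_exchangeable {S : Type*} [Fintype S] [DecidableEq S]
    (K : S → S → ℝ) (hanti : ∀ α β, K α β = -K β α) (hrow : ∀ α, ∑ β, K α β = 0)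
    (hK : ∀ α β, -1 ≤ K α β) {α₀ β₀ : S} (hpos : 0 < K α₀ β₀) {n : ℕ} (hn : 2 ≤ n) :
    ∃ μ : (Fin n → S) → ℝ,
      (∀ x, 0 ≤ μ x) ∧
      (∑ x : Fin n → S, μ x = 1) ∧
      (∀ f : S → Fin 2, ∀ π : Equiv.Perm (Fin n), ∀ y : Fin n → Fin 2,
        (∑ x : Fin n → S, if (fun i => f (x i)) = y ∘ π then μ x else 0) =
          ∑ x : Fin n → S, if (fun i => f (x i)) = y then μ x else 0) ∧
      ¬ (∀ π : Equiv.Perm (Fin n), ∀ x : Fin n → S, μ (x ∘ π) = μ x) := by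
  obtain ⟨i, j, hji⟩ : ∃ i j : Fin n, j ≠ i :=
    ⟨⟨0, by omega⟩, ⟨1, by omega⟩, by simp [Fin.ext_iff]⟩
  set N : ℝ := (Fintype.card (Fin n → S) : ℝ)
  have : Nonempty S := ⟨α₀⟩
  have hN : 0 < N := Nat.cast_pos.mpr Fintype.card_pos
  refine ⟨fun x => (1 + pairPerturbation K i x) / N, fun x => ?_, ?_, fun f π y => ?_,
    fun hexch => ?_⟩
  · have := neg_one_le_pairPerturbation K i hji hK x
    exact div_nonneg (by linarith) hN.le
  · rw [← sum_div, sum_add_distrib, sum_pairPerturbation K i hrow]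
    simp [N]
  · have hpush : ∀ y' : Fin n → Fin 2,
        ∑ x, (if (fun k => f (x k)) = y' then (1 + pairPerturbation K i x) / N else 0) =
          #{x : Fin n → S | (fun k => f (x k)) = y'} / N := fun y' => by
      rw [← sum_filter, ← sum_div, sum_add_distrib,
        sum_filter_comp_pairPerturbation_eq_zero K i hanti hrow]
      simp
    rw [hpush, hpush, card_filter_comp_eq_comp_perm]
  · have h := hexch (Equiv.swap i j) (update (fun _ => β₀) i α₀)
    simp only at h
    rw [div_left_inj' hN.ne', pairPerturbation_update K i hji] at h
    linarith [pairPerturbation_update_comp_swap_nonpos K i hji hanti hpos.le]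

def cyclicSign (α β : ↥S3) : ℤ :=
  if ((β : ℤ) - α) % 3 = 1 then 1 else if ((β : ℤ) - α) % 3 = 2 then -1 else 0

lemma cyclicSign_antisymm : ∀ α β : ↥S3, cyclicSign α β = -cyclicSign β α := by decide

lemma sum_cyclicSign : ∀ α : ↥S3, ∑ β, cyclicSign α β = 0 := by decide

lemma neg_one_le_cyclicSign : ∀ α β : ↥S3, -1 ≤ cyclicSign α β := by decide

lemma cyclicSign_em1_e0 : cyclicSign em1 e0 = 1 := by decide

/-- For every `n ≥ 2` there is a probability distribution on `{-1,0,1}ⁿ` that is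
two-color exchangeable but not exchangeable. -/
theorem stmt_12 (n : ℕ) (hn : 2 ≤ n) :
    ∃ μ : (Fin n → ↥S3) → ℝ,
      (∀ x, 0 ≤ μ x) ∧
      (∑ x : Fin n → ↥S3, μ x = 1) ∧
      (∀ f : ↥S3 → Fin 2, ∀ π : Equiv.Perm (Fin n), ∀ y : Fin n → Fin 2,
        (∑ x : Fin n → ↥S3, if (fun i => f (x i)) = y ∘ π then μ x else 0) =
          ∑ x : Fin n → ↥S3, if (fun i => f (x i)) = y then μ x else 0) ∧
      ¬ (∀ π : Equiv.Perm (Fin n), ∀ x : Fin n → ↥S3, μ (x ∘ π) = μ x) :=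
  exists_twoColorExchangeable_not_exchangeable (fun α β => (cyclicSign α β : ℝ))
    (fun α β => by exact_mod_cast cyclicSign_antisymm α β)
    (fun α => by exact_mod_cast sum_cyclicSign α)
    (fun α β => by exact_mod_cast neg_one_le_cyclicSign α β)
    (α₀ := em1) (β₀ := e0) (by simp [cyclicSign_em1_e0]) hn
end

section
/- For n ≥ 3 and the measure μ on Ω with μ(f_{-1,i})=μ(f_{1,i})=μ(s_{0,i})=(n-i+1)/(3n(n+1)) and μ(s_{-1,i})=μ(s_{1,i})=μ(f_{0,i})=i/(3n(n+1)), for each α ∈ {-1,0,1} the pushforward ν_α of μ under coordinatewise δ_α satisfies ν_α(ω) = 1/(3n) for every ω ∈ {0,1}ⁿ with ∑ωᵢ ∈ {1, n-1}. -/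
/-!
At each position `i` the measure `μ` charges two triples of strings, with masses
`(n - i)/(3n(n+1))` and `(i + 1)/(3n(n+1))` (zero-based `i`) adding up to `1/(3n)`.
For every symbol `α`, `δ_α` maps each triple onto the three binary strings `eᵢ` (a single one,
at `i`), its complement, and `0`, one string each. Hence
`ν_α = (1/(3n)) ∑ᵢ (δ_{eᵢ} + δ_{1 - eᵢ} + δ_0)` whatever `α` is, and for `n ≥ 3` a binary
string of weight `1` or `n - 1` is exactly one of these `3n` strings.
-/

open Finset

lemma sum_ite_eq_or_eq_or_eq {β M : Type*} [Fintype β] [DecidableEq β] [AddCommMonoid M]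
    {a b c : β} (hab : a ≠ b) (hac : a ≠ c) (hbc : b ≠ c) (f : β → M) :
    ∑ x, (if x = a ∨ x = b ∨ x = c then f x else 0) = f a + f b + f c := by
  rw [← sum_filter]
  have : univ.filter (fun x => x = a ∨ x = b ∨ x = c) = {a, b, c} := by ext; simp
  rw [this, sum_insert (by simp [hab, hac]), sum_pair hbc, add_assoc]

lemma str_ne_str {n : ℕ} {γ γ' : ↥S3} (h : γ ≠ γ') (β β' : ↥S3) (i : Fin n) :
    str n γ β i ≠ str n γ' β' i := fun he => h (by simpa [str] using congrFun he i)

noncomputable def massDec (n : ℕ) (i : Fin n) : ℝ := ((n : ℝ) - (i : ℕ)) / (3 * n * (n + 1))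

noncomputable def massInc (n : ℕ) (i : Fin n) : ℝ := (((i : ℕ) : ℝ) + 1) / (3 * n * (n + 1))

lemma massDec_add_massInc {n : ℕ} (hn : n ≠ 0) (i : Fin n) :
    massDec n i + massInc n i = 1 / (3 * n) := by
  have : (n : ℝ) ≠ 0 := by exact_mod_cast hn
  rw [massDec, massInc, ← add_div]
  field_simp
  ring

lemma sum_muPaper_mul (n : ℕ) (g : (Fin n → ↥S3) → ℝ) :
    ∑ x, muPaper n x * g x = ∑ i, (massDec n i *
        (g (str n em1 e0 i) + g (str n e1 em1 i) + g (str n e0 e1 i)) +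
      massInc n i * (g (str n em1 e1 i) + g (str n e1 e0 i) + g (str n e0 em1 i))) := by
  simp only [muPaper, sum_mul]
  rw [sum_comm]
  refine sum_congr rfl fun i _ => ?_
  simp only [add_mul, ite_mul, zero_mul, sum_add_distrib]
  rw [sum_ite_eq_or_eq_or_eq (str_ne_str (by decide) _ _ i) (str_ne_str (by decide) _ _ i)
      (str_ne_str (by decide) _ _ i),
    sum_ite_eq_or_eq_or_eq (str_ne_str (by decide) _ _ i) (str_ne_str (by decide) _ _ i)
      (str_ne_str (by decide) _ _ i)]
  simp only [massDec, massInc]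
  ring

def delta {n : ℕ} (α : ↥S3) (x : Fin n → ↥S3) : Fin n → Fin 2 :=
  fun k => if x k = α then 1 else 0

def str2 (n : ℕ) (a b : Fin 2) (i : Fin n) : Fin n → Fin 2 := fun k => if k = i then a else b

lemma delta_str {n : ℕ} (α γ β : ↥S3) (i : Fin n) :
    delta α (str n γ β i) = str2 n (if γ = α then 1 else 0) (if β = α then 1 else 0) i := by
  funext k
  simp only [delta, str, str2]
  split <;> rfl

lemma eq_em1_or_eq_e0_or_eq_e1 : ∀ α : ↥S3, α = em1 ∨ α = e0 ∨ α = e1 := by decide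

lemma sum_comp_delta_dec {n : ℕ} (α : ↥S3) (g : (Fin n → Fin 2) → ℝ) (i : Fin n) :
    g (delta α (str n em1 e0 i)) + g (delta α (str n e1 em1 i)) + g (delta α (str n e0 e1 i)) =
      g (str2 n 1 0 i) + g (str2 n 0 1 i) + g (str2 n 0 0 i) := by
  rcases eq_em1_or_eq_e0_or_eq_e1 α with rfl | rfl | rfl <;>
    simp +decide only [delta_str] <;> ac_rfl

lemma sum_comp_delta_inc {n : ℕ} (α : ↥S3) (g : (Fin n → Fin 2) → ℝ) (i : Fin n) :
    g (delta α (str n em1 e1 i)) + g (delta α (str n e1 e0 i)) + g (delta α (str n e0 em1 i)) =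
      g (str2 n 1 0 i) + g (str2 n 0 1 i) + g (str2 n 0 0 i) := by
  rcases eq_em1_or_eq_e0_or_eq_e1 α with rfl | rfl | rfl <;>
    simp +decide only [delta_str] <;> ac_rfl

lemma sum_muPaper_mul_comp_delta {n : ℕ} (hn : n ≠ 0) (α : ↥S3) (g : (Fin n → Fin 2) → ℝ) :
    ∑ x, muPaper n x * g (delta α x) =
      1 / (3 * n) * ∑ i, (g (str2 n 1 0 i) + g (str2 n 0 1 i) + g (str2 n 0 0 i)) := by
  rw [sum_muPaper_mul, mul_sum]
  refine sum_congr rfl fun i _ => ?_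
  rw [sum_comp_delta_dec, sum_comp_delta_inc, ← add_mul, massDec_add_massInc hn]

lemma sum_str2 (n : ℕ) (a b : Fin 2) (i : Fin n) :
    ∑ k, (str2 n a b i k : ℕ) = a + (n - 1) * b := by
  have hrest : ∀ k ∈ univ.erase i, (str2 n a b i k : ℕ) = b := fun k hk => by
    simp [str2, ne_of_mem_erase hk]
  rw [← add_sum_erase _ _ (mem_univ i), sum_congr rfl hrest, sum_const,
    card_erase_of_mem (mem_univ i)]
  simp [str2]

lemma sum_val_eq_card_filter {n : ℕ} (ω : Fin n → Fin 2) :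
    ∑ k, (ω k : ℕ) = #{k | ω k = 1} := by
  rw [card_filter]
  exact sum_congr rfl fun k _ => by generalize ω k = v; fin_cases v <;> rfl

lemma exists_eq_str2_of_card_filter_eq_one {n : ℕ} {ω : Fin n → Fin 2} {a b : Fin 2}
    (hab : a ≠ b) (h : #{k | ω k = a} = 1) : ∃ j, ω = str2 n a b j := by
  obtain ⟨j, hj⟩ := card_eq_one.1 h
  refine ⟨j, funext fun k => ?_⟩
  have hk : ω k = a ↔ k = j := by simpa using Finset.ext_iff.1 hj k
  by_cases hkj : k = j
  · simpa [str2, hkj] using hk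
  · simp only [str2, hkj, if_false]
    have := hk.not.2 hkj
    omega

lemma str2_inj {n : ℕ} {a b : Fin 2} (hab : a ≠ b) {i j : Fin n} :
    str2 n a b i = str2 n a b j ↔ i = j := by
  refine ⟨fun h => ?_, fun h => h ▸ rfl⟩
  by_contra hij
  exact hab (by simpa [str2, hij] using congrFun h i)

lemma sum_ite_str2_eq_one {n : ℕ} (hn : 3 ≤ n) {ω : Fin n → Fin 2}
    (hω : ∑ k, (ω k : ℕ) = 1 ∨ ∑ k, (ω k : ℕ) = n - 1) :
    ∑ i, ((if str2 n 1 0 i = ω then 1 else 0) + (if str2 n 0 1 i = ω then 1 else 0) +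
      (if str2 n 0 0 i = ω then 1 else 0) : ℝ) = 1 := by
  have w10 (i : Fin n) : ∑ k, (str2 n 1 0 i k : ℕ) = 1 := by simpa using sum_str2 n 1 0 i
  have w01 (i : Fin n) : ∑ k, (str2 n 0 1 i k : ℕ) = n - 1 := by simpa using sum_str2 n 0 1 i
  have w00 (i : Fin n) : ∑ k, (str2 n 0 0 i k : ℕ) = 0 := by simpa using sum_str2 n 0 0 i
  rcases hω with h | h
  · have h01 (i : Fin n) : str2 n 0 1 i ≠ ω := fun he => by
      have := w01 i; rw [he] at this; omega
    have h00 (i : Fin n) : str2 n 0 0 i ≠ ω := fun he => by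
      have := w00 i; rw [he] at this; omega
    obtain ⟨j, rfl⟩ := exists_eq_str2_of_card_filter_eq_one (a := 1) (b := 0) (by decide)
      (by rwa [← sum_val_eq_card_filter])
    simp [h01, h00, str2_inj]
  · have h10 (i : Fin n) : str2 n 1 0 i ≠ ω := fun he => by
      have := w10 i; rw [he] at this; omega
    have h00 (i : Fin n) : str2 n 0 0 i ≠ ω := fun he => by
      have := w00 i; rw [he] at this; omega
    have hzeros : #{k | ω k = 0} = 1 := by
      have := card_filter_add_card_filter_not (s := univ) (fun k => ω k = 1)
      rw [← sum_val_eq_card_filter, h, card_univ, Fintype.card_fin] at this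
      rw [filter_congr fun k _ => (by omega : ω k = 0 ↔ ¬ ω k = 1)]
      omega
    obtain ⟨j, rfl⟩ := exists_eq_str2_of_card_filter_eq_one (a := 0) (b := 1) (by decide) hzeros
    simp [h10, h00, str2_inj]

/-- For the measure `μ` of the paper and each `α ∈ {-1,0,1}`, the pushforward
`ν_α` under coordinatewise `δ_α` gives mass `1/(3n)` to every `ω ∈ {0,1}ⁿ`
whose coordinate sum is `1` or `n-1`. -/
theorem stmt_18 (n : ℕ) (hn : 3 ≤ n) (α : ↥S3) (ω : Fin n → Fin 2)
    (hω : (∑ i, (ω i : ℕ)) = 1 ∨ (∑ i, (ω i : ℕ)) = n - 1) :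
    (∑ x : Fin n → ↥S3,
        if (fun i => if x i = α then (1 : Fin 2) else 0) = ω then muPaper n x else 0) =
      1 / (3 * n) := by
  have h := sum_muPaper_mul_comp_delta (by omega) α fun v => if v = ω then (1 : ℝ) else 0
  simp only [mul_ite, mul_one, mul_zero] at h
  rw [sum_ite_str2_eq_one hn hω, mul_one] at h
  exact h
end
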